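/- Bilinear evaluation multiplicativity: for f multihomogeneous of multidegree (d̄_x, d̄_y, d̄_z) with d̄_x ≤ d_x and d̄_y ≤ d_y, and for g_z homogeneous in z of degree d_z, the contraction ψ(𝟙^x_α(d_x) ⊗ 𝟙^y_α(d_y) ⊗ g_z, f) equals 𝟙^x_α(d_x − d̄_x) ⊗ 𝟙^y_α(d_y − d̄_y) ⊗ (g_z · f(α_x, α_y, z)), where f(α_x,α_y,z) is the normalized partial evaluation. -/

import Mathlib

open MvPolynomial

variable {K : Type*} [Field K] {n_x n_y n_z : ℕ}

/-- Restriction of an exponent vector to the `x` block. -/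
noncomputable def restX (θ : (Fin (n_x + 1) ⊕ Fin (n_y + 1) ⊕ Fin (n_z + 1)) →₀ ℕ) :
    Fin (n_x + 1) →₀ ℕ :=
  Finsupp.comapDomain Sum.inl θ Sum.inl_injective.injOn

/-- Restriction of an exponent vector to the `y` block. -/
noncomputable def restY (θ : (Fin (n_x + 1) ⊕ Fin (n_y + 1) ⊕ Fin (n_z + 1)) →₀ ℕ) :
    Fin (n_y + 1) →₀ ℕ :=
  Finsupp.comapDomain (Sum.inr ∘ Sum.inl) θ
    (Sum.inr_injective.comp Sum.inl_injective).injOn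

/-- Restriction of an exponent vector to the `z` block. -/
noncomputable def restZ (θ : (Fin (n_x + 1) ⊕ Fin (n_y + 1) ⊕ Fin (n_z + 1)) →₀ ℕ) :
    Fin (n_z + 1) →₀ ℕ :=
  Finsupp.comapDomain (Sum.inr ∘ Sum.inr) θ
    (Sum.inr_injective.comp Sum.inr_injective).injOn

/-- The contraction map ψ : (K[x]* ⊗ K[y]* ⊗ K[z]) × K[x,y,z] → K[x]* ⊗ K[y]* ⊗ K[z];
elements of K[x]* ⊗ K[y]* ⊗ K[z] are represented as functions of two exponent vectors
with values in K[z].  On monomials,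
ψ(∂x^{σx} ⊗ ∂y^{σy} ⊗ z^{σz}, x^{θx} y^{θy} z^{θz})
  = (x^{θx} ⋆ ∂x^{σx}) ⊗ (y^{θy} ⋆ ∂y^{σy}) ⊗ z^{θz+σz}. -/
noncomputable def psi
    (T : (Fin (n_x + 1) →₀ ℕ) → (Fin (n_y + 1) →₀ ℕ) → MvPolynomial (Fin (n_z + 1)) K)
    (f : MvPolynomial (Fin (n_x + 1) ⊕ Fin (n_y + 1) ⊕ Fin (n_z + 1)) K) :
    (Fin (n_x + 1) →₀ ℕ) → (Fin (n_y + 1) →₀ ℕ) → MvPolynomial (Fin (n_z + 1)) K :=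
  fun τx τy => ∑ θ ∈ f.support,
    f.coeff θ • (monomial (restZ θ) (1 : K) * T (τx + restX θ) (τy + restY θ))

/-- The tensor `𝟙^x_α(d_x) ⊗ 𝟙^y_α(d_y) ⊗ g_z`. -/
noncomputable def oneTensor (αx : Fin (n_x + 1) → K) (αy : Fin (n_y + 1) → K)
    (d_x d_y : ℕ) (gz : MvPolynomial (Fin (n_z + 1)) K) :
    (Fin (n_x + 1) →₀ ℕ) → (Fin (n_y + 1) →₀ ℕ) → MvPolynomial (Fin (n_z + 1)) K :=
  fun σx σy =>
    if (σx.sum fun _ e => e) = d_x ∧ (σy.sum fun _ e => e) = d_y then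
      (((σx.prod fun i e => αx i ^ e) / αx 0 ^ d_x) *
        ((σy.prod fun j e => αy j ^ e) / αy 0 ^ d_y)) • gz
    else 0

/-- `f` is multihomogeneous of multidegree `(d_x, d_y, d_z)`. -/
def IsMultiHomogeneous
    (f : MvPolynomial (Fin (n_x + 1) ⊕ Fin (n_y + 1) ⊕ Fin (n_z + 1)) K)
    (d_x d_y d_z : ℕ) : Prop :=
  ∀ σ ∈ f.support,
    (∑ i, σ (Sum.inl i)) = d_x ∧ (∑ j, σ (Sum.inr (Sum.inl j))) = d_y ∧
      (∑ l, σ (Sum.inr (Sum.inr l))) = d_z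

/-- Normalized partial evaluation `f(α_x, α_y, z) / (α_{x,0}^{d̄_x} α_{y,0}^{d̄_y})`. -/
noncomputable def partialEvalNorm (αx : Fin (n_x + 1) → K) (αy : Fin (n_y + 1) → K)
    (dbar_x dbar_y : ℕ)
    (f : MvPolynomial (Fin (n_x + 1) ⊕ Fin (n_y + 1) ⊕ Fin (n_z + 1)) K) :
    MvPolynomial (Fin (n_z + 1)) K :=
  C ((αx 0 ^ dbar_x * αy 0 ^ dbar_y)⁻¹) *
    aeval (Sum.elim (fun i => C (αx i)) (Sum.elim (fun j => C (αy j)) X)) f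

/-! The functional `𝟙_α(d)` weights each index `σ` of degree `d` by `α^σ / α₀^d`. Contracting
with a monomial `x^θ` shifts the index by `θ`, and since `σ ↦ α^σ` is multiplicative this
multiplies the functional by `α^θ / α₀^|θ|` while lowering its degree by `|θ|`. Summing over the
monomials of `f`, all of the same bidegree `(d̄_x, d̄_y)`, collects exactly the coefficients of the
normalized partial evaluation `f(α_x, α_y, z)`. -/

lemma sum_restX (θ : (Fin (n_x + 1) ⊕ Fin (n_y + 1) ⊕ Fin (n_z + 1)) →₀ ℕ) :
    ((restX θ).sum fun _ e => e) = ∑ i, θ (Sum.inl i) := by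
  rw [Finsupp.sum_fintype _ _ (fun _ => rfl)]
  simp [restX]

lemma sum_restY (θ : (Fin (n_x + 1) ⊕ Fin (n_y + 1) ⊕ Fin (n_z + 1)) →₀ ℕ) :
    ((restY θ).sum fun _ e => e) = ∑ j, θ (Sum.inr (Sum.inl j)) := by
  rw [Finsupp.sum_fintype _ _ (fun _ => rfl)]
  simp [restY]

lemma prod_restX (φ : Fin (n_x + 1) → K)
    (θ : (Fin (n_x + 1) ⊕ Fin (n_y + 1) ⊕ Fin (n_z + 1)) →₀ ℕ) :
    ((restX θ).prod fun i e => φ i ^ e) = ∏ i, φ i ^ θ (Sum.inl i) := by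
  rw [Finsupp.prod_fintype _ _ (fun _ => pow_zero _)]
  simp [restX]

lemma prod_restY (φ : Fin (n_y + 1) → K)
    (θ : (Fin (n_x + 1) ⊕ Fin (n_y + 1) ⊕ Fin (n_z + 1)) →₀ ℕ) :
    ((restY θ).prod fun j e => φ j ^ e) = ∏ j, φ j ^ θ (Sum.inr (Sum.inl j)) := by
  rw [Finsupp.prod_fintype _ _ (fun _ => pow_zero _)]
  simp [restY]

lemma prod_restZ_X (θ : (Fin (n_x + 1) ⊕ Fin (n_y + 1) ⊕ Fin (n_z + 1)) →₀ ℕ) :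
    ∏ l, (X l : MvPolynomial (Fin (n_z + 1)) K) ^ θ (Sum.inr (Sum.inr l))
      = monomial (restZ θ) 1 := by
  rw [monomial_eq, Finsupp.prod_fintype _ _ (fun _ => pow_zero _)]
  simp [restZ]

lemma aeval_elim_C_C_X (αx : Fin (n_x + 1) → K) (αy : Fin (n_y + 1) → K)
    (f : MvPolynomial (Fin (n_x + 1) ⊕ Fin (n_y + 1) ⊕ Fin (n_z + 1)) K) :
    aeval (Sum.elim (fun i => C (αx i)) (Sum.elim (fun j => C (αy j)) X)) f
      = ∑ θ ∈ f.support,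
          (f.coeff θ * ((restX θ).prod fun i e => αx i ^ e) *
            (restY θ).prod fun j e => αy j ^ e) • monomial (restZ θ) (1 : K) := by
  conv_lhs => rw [f.as_sum, map_sum]
  refine Finset.sum_congr rfl fun θ _ => ?_
  rw [aeval_monomial, Finsupp.prod_fintype _ _ (fun _ => pow_zero _),
    Fintype.prod_sum_type, Fintype.prod_sum_type]
  simp only [Sum.elim_inl, Sum.elim_inr, prod_restZ_X, prod_restX, prod_restY, ← C_pow,
    ← map_prod, smul_eq_C_mul, algebraMap_eq, map_mul]
  ring

lemma partialEvalNorm_eq_sum (αx : Fin (n_x + 1) → K) (αy : Fin (n_y + 1) → K)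
    (dbar_x dbar_y : ℕ)
    (f : MvPolynomial (Fin (n_x + 1) ⊕ Fin (n_y + 1) ⊕ Fin (n_z + 1)) K) :
    partialEvalNorm αx αy dbar_x dbar_y f
      = ∑ θ ∈ f.support,
          (f.coeff θ * (((restX θ).prod fun i e => αx i ^ e) / αx 0 ^ dbar_x *
            (((restY θ).prod fun j e => αy j ^ e) / αy 0 ^ dbar_y)))
            • monomial (restZ θ) (1 : K) := by
  rw [partialEvalNorm, aeval_elim_C_C_X, Finset.mul_sum]
  refine Finset.sum_congr rfl fun θ _ => ?_
  rw [← smul_eq_C_mul, smul_smul]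
  congr 1
  ring

lemma oneTensor_mul_right (αx : Fin (n_x + 1) → K) (αy : Fin (n_y + 1) → K) (d_x d_y : ℕ)
    (g h : MvPolynomial (Fin (n_z + 1)) K) (σx : Fin (n_x + 1) →₀ ℕ)
    (σy : Fin (n_y + 1) →₀ ℕ) :
    oneTensor αx αy d_x d_y (g * h) σx σy = oneTensor αx αy d_x d_y g σx σy * h := by
  unfold oneTensor
  split_ifs
  · exact smul_mul_assoc _ _ _ |>.symm
  · exact (zero_mul h).symm

lemma oneTensor_add_apply (αx : Fin (n_x + 1) → K) (αy : Fin (n_y + 1) → K)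
    {d_x d_y e_x e_y : ℕ} (hx : e_x ≤ d_x) (hy : e_y ≤ d_y)
    (gz : MvPolynomial (Fin (n_z + 1)) K) (σx ρx : Fin (n_x + 1) →₀ ℕ)
    (σy ρy : Fin (n_y + 1) →₀ ℕ) (hρx : (ρx.sum fun _ e => e) = e_x)
    (hρy : (ρy.sum fun _ e => e) = e_y) :
    oneTensor αx αy d_x d_y gz (σx + ρx) (σy + ρy)
      = (((ρx.prod fun i e => αx i ^ e) / αx 0 ^ e_x) *
          ((ρy.prod fun j e => αy j ^ e) / αy 0 ^ e_y)) •
        oneTensor αx αy (d_x - e_x) (d_y - e_y) gz σx σy := by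
  obtain ⟨k_x, rfl⟩ := Nat.exists_eq_add_of_le hx
  obtain ⟨k_y, rfl⟩ := Nat.exists_eq_add_of_le hy
  have hsx : ((σx + ρx).sum fun _ e => e) = (σx.sum fun _ e => e) + e_x := by
    rw [Finsupp.sum_add_index' (fun _ => rfl) (fun _ _ _ => rfl), hρx]
  have hsy : ((σy + ρy).sum fun _ e => e) = (σy.sum fun _ e => e) + e_y := by
    rw [Finsupp.sum_add_index' (fun _ => rfl) (fun _ _ _ => rfl), hρy]
  unfold oneTensor
  rw [hsx, hsy, add_comm e_x, add_comm e_y, Nat.add_sub_cancel, Nat.add_sub_cancel]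
  simp only [Nat.add_right_cancel_iff, smul_ite, smul_zero, smul_smul,
    Finsupp.prod_add_index' (fun _ => pow_zero _) (fun _ _ _ => pow_add _ _ _), pow_add]
  congr 2
  ring

theorem stmt15_general (αx : Fin (n_x + 1) → K) (αy : Fin (n_y + 1) → K)
    (d_x d_y dbar_x dbar_y dbar_z : ℕ)
    (hdx : dbar_x ≤ d_x) (hdy : dbar_y ≤ d_y)
    (gz : MvPolynomial (Fin (n_z + 1)) K)
    (f : MvPolynomial (Fin (n_x + 1) ⊕ Fin (n_y + 1) ⊕ Fin (n_z + 1)) K)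
    (hf : IsMultiHomogeneous f dbar_x dbar_y dbar_z) :
    psi (oneTensor αx αy d_x d_y gz) f
      = oneTensor αx αy (d_x - dbar_x) (d_y - dbar_y)
          (gz * partialEvalNorm αx αy dbar_x dbar_y f) := by
  funext τx τy
  unfold psi
  rw [oneTensor_mul_right, partialEvalNorm_eq_sum, Finset.mul_sum]
  refine Finset.sum_congr rfl fun θ hθ => ?_
  obtain ⟨hθx, hθy, -⟩ := hf θ hθ
  rw [oneTensor_add_apply αx αy hdx hdy gz τx (restX θ) τy (restY θ)
    (by rw [sum_restX, hθx]) (by rw [sum_restY, hθy])]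
  simp only [smul_eq_C_mul, map_mul]
  ring

/-- Bilinear evaluation multiplicativity:
ψ(𝟙^x_α(d_x) ⊗ 𝟙^y_α(d_y) ⊗ g_z, f)
  = 𝟙^x_α(d_x − d̄_x) ⊗ 𝟙^y_α(d_y − d̄_y) ⊗ (g_z · f(α_x, α_y, z)). -/
theorem stmt15 (αx : Fin (n_x + 1) → K) (αy : Fin (n_y + 1) → K)
    (hx : αx 0 ≠ 0) (hy : αy 0 ≠ 0) (d_x d_y d_z dbar_x dbar_y dbar_z : ℕ)
    (hdx : dbar_x ≤ d_x) (hdy : dbar_y ≤ d_y)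
    (gz : MvPolynomial (Fin (n_z + 1)) K) (hgz : gz.IsHomogeneous d_z)
    (f : MvPolynomial (Fin (n_x + 1) ⊕ Fin (n_y + 1) ⊕ Fin (n_z + 1)) K)
    (hf : IsMultiHomogeneous f dbar_x dbar_y dbar_z) :
    psi (oneTensor αx αy d_x d_y gz) f
      = oneTensor αx αy (d_x - dbar_x) (d_y - dbar_y)
          (gz * partialEvalNorm αx αy dbar_x dbar_y f) :=
  stmt15_general αx αy d_x d_y dbar_x dbar_y dbar_z hdx hdy gz f hf
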